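/- arXiv:1901.07093 — 11 statements merged into one kernel-verified Lean document; each statement's English description precedes it below -/
import Mathlib

section
/- If F ⊆ Sym²(ℝⁿ) is a closed set satisfying the positivity condition F + P ⊆ F (where P is the cone of positive semidefinite matrices), then F equals the closure of its interior: F = closure(interior F), provided F is nonempty and not all of Sym²(ℝⁿ). -/
open Topology Pointwise

abbrev SymMat (n : ℕ) : Type := selfAdjoint (Matrix (Fin n) (Fin n) ℝ)

def PSD (n : ℕ) : Set (SymMat n) := {A | (A : Matrix (Fin n) (Fin n) ℝ).PosSemidef}

def dual {n : ℕ} (F : Set (SymMat n)) : Set (SymMat n) := {A | -A ∉ interior F}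

/-!
Each `A ∈ F` is the limit of `A + ε • 1` as `ε → 0⁺`, and `A + ε • 1` lies in the open set
`A + interior P ⊆ F` because `ε • 1` is positive definite and positive definiteness is an open
condition. Hence `F ⊆ closure (interior F)`; closedness of `F` gives the other inclusion.
-/

theorem subset_closure_interior_of_add_subset {G : Type*} [AddGroup G] [TopologicalSpace G]
    [IsTopologicalAddGroup G] {F P : Set G} (hFP : F + P ⊆ F)
    (hP : (0 : G) ∈ closure (interior P)) : F ⊆ closure (interior F) := by
  intro a ha
  have hshift : (a + ·) '' interior P ⊆ interior F :=
    interior_maximal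
      (Set.image_subset_iff.2 fun p hp => hFP (Set.add_mem_add ha (interior_subset hp)))
      ((isOpenMap_add_left a) _ isOpen_interior)
  simpa using map_mem_closure (continuous_const_add a) hP fun p hp => hshift ⟨p, hp, rfl⟩

open Matrix in
theorem Matrix.PosDef.eventually_forall_dotProduct_mulVec_pos {ι : Type*} [Fintype ι]
    {M : Matrix ι ι ℝ} (hM : M.PosDef) :
    ∀ᶠ N in 𝓝 M, ∀ x : ι → ℝ, x ≠ 0 → 0 < x ⬝ᵥ N *ᵥ x := by
  have hcont : Continuous fun p : Matrix ι ι ℝ × (ι → ℝ) => p.2 ⬝ᵥ p.1 *ᵥ p.2 :=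
    continuous_snd.dotProduct (continuous_fst.matrix_mulVec continuous_snd)
  -- positivity on the compact unit sphere persists under small perturbations of `M`
  have hsphere : ∀ᶠ N in 𝓝 M, ∀ y ∈ Metric.sphere (0 : ι → ℝ) 1, 0 < y ⬝ᵥ N *ᵥ y := by
    refine (isCompact_sphere 0 1).eventually_forall_of_forall_eventually fun y hy => ?_
    have hy0 : y ≠ 0 := ne_zero_of_mem_unit_sphere ⟨y, hy⟩
    exact (hcont.tendsto (M, y)).eventually
      (lt_mem_nhds (by simpa using (posDef_iff_dotProduct_mulVec.1 hM).2 hy0))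
  filter_upwards [hsphere] with N hN x hx
  have hnorm : 0 < ‖x‖ := norm_pos_iff.2 hx
  have hunit : ‖x‖⁻¹ • x ∈ Metric.sphere (0 : ι → ℝ) 1 := by
    simp [norm_smul, hnorm.ne']
  have hscaled := hN _ hunit
  rw [mulVec_smul, dotProduct_smul, smul_dotProduct, smul_eq_mul, smul_eq_mul,
    ← mul_assoc] at hscaled
  exact pos_of_mul_pos_right hscaled (by positivity)

theorem posDef_mem_interior_PSD {n : ℕ} {A : SymMat n}
    (hA : (A : Matrix (Fin n) (Fin n) ℝ).PosDef) : A ∈ interior (PSD n) := by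
  refine mem_interior_iff_mem_nhds.2 ?_
  filter_upwards [continuous_subtype_val.continuousAt.eventually
    hA.eventually_forall_dotProduct_mulVec_pos] with B hB
  refine Matrix.posSemidef_iff_dotProduct_mulVec.2 ⟨B.2, fun x => ?_⟩
  rcases eq_or_ne x 0 with rfl | hx
  · simp
  · simpa using (hB x hx).le

theorem zero_mem_closure_interior_PSD (n : ℕ) : (0 : SymMat n) ∈ closure (interior (PSD n)) := by
  have hlim : Filter.Tendsto (fun t : ℝ => t • (1 : SymMat n)) (𝓝[>] 0) (𝓝 0) := by
    have hcont : Continuous fun t : ℝ => t • (1 : SymMat n) :=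
      continuous_induced_rng.2 (continuous_id.smul continuous_const)
    simpa using (hcont.tendsto 0).mono_left nhdsWithin_le_nhds
  refine mem_closure_of_tendsto hlim ?_
  filter_upwards [self_mem_nhdsWithin] with t ht
  exact posDef_mem_interior_PSD (Matrix.PosDef.one.smul ht)

theorem stmt0_general (n : ℕ) (F : Set (SymMat n)) (hcl : IsClosed F)
    (hpos : F + PSD n ⊆ F) :
    F = closure (interior F) :=
  (subset_closure_interior_of_add_subset hpos (zero_mem_closure_interior_PSD n)).antisymm
    (closure_minimal interior_subset hcl)

theorem stmt0 (n : ℕ) (F : Set (SymMat n)) (hcl : IsClosed F)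
    (hpos : F + PSD n ⊆ F) (hne : F.Nonempty) (hproper : F ≠ Set.univ) :
    F = closure (interior F) :=
  stmt0_general n F hcl hpos
end

section
/- If F ⊆ Sym²(ℝⁿ) is a subequation (closed and F + P ⊆ F), then its Dirichlet dual F̃ := complement of (−interior F) is also a subequation, i.e., F̃ is closed and F̃ + P ⊆ F̃. -/
open Topology Pointwise

theorem stmt1 (n : ℕ) (F : Set (SymMat n)) (hcl : IsClosed F)
    (hpos : F + PSD n ⊆ F) :
    IsClosed (dual F) ∧ dual F + PSD n ⊆ dual F := by
  constructor
  · have : dual F = (Neg.neg ⁻¹' (interior F))ᶜ := by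
      ext A; simp [dual]
    rw [this]
    exact (isOpen_interior.preimage continuous_neg).isClosed_compl
  · rintro x ⟨A, hA, P, hP, rfl⟩
    intro hmem
    apply hA
    have hopen : IsOpen ((· + P) '' interior F) :=
      (Homeomorph.addRight P).isOpenMap _ isOpen_interior
    have hsub : ((· + P) '' interior F) ⊆ F := by
      rintro _ ⟨y, hy, rfl⟩
      exact hpos ⟨y, interior_subset hy, P, hP, rfl⟩
    have : -(A + P) + P ∈ interior F :=
      interior_maximal hsub hopen ⟨-(A + P), hmem, rfl⟩
    simpa [neg_add, add_assoc] using this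
end

section
/- For any nonempty proper subequation F ⊆ Sym²(ℝⁿ), one has F = ∂F + P, where ∂F is the topological boundary of F and P is the positive semidefinite cone. -/
open Topology Pointwise

/-!
Let `A ∈ F` and follow the ray `t ↦ A - t • 1`, `t ≥ 0`. Pick `B ∉ F`. By Gershgorin's theorem
`B - (A - t • 1)` is positive semidefinite for large `t`, so `A - t • 1 ∉ F` there, as `F` is
stable under adding `P`. The ray starts in `F` and leaves it, so by connectedness of `[0, ∞)` it
meets `∂F` at some `A - t • 1`, and `A = (A - t • 1) + t • 1 ∈ ∂F + P`. Conversely `∂F ⊆ F`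
because `F` is closed.
-/

open Filter Finset
open scoped NNReal

namespace Matrix

variable {ι : Type*} [Fintype ι] [DecidableEq ι] {A : Matrix ι ι ℝ}

theorem IsHermitian.posSemidef_of_sum_row_le_diag (hA : A.IsHermitian)
    (h : ∀ k, ∑ j ∈ univ.erase k, |A k j| ≤ A k k) : A.PosSemidef := by
  refine hA.posSemidef_iff_eigenvalues_nonneg.2 fun i => ?_
  have hμ := hA.eigenvalues_mem_spectrum_real i
  rw [← spectrum_toLin', ← Module.End.hasEigenvalue_iff_mem_spectrum] at hμ
  obtain ⟨k, hk⟩ := eigenvalue_mem_ball hμ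
  rw [Metric.mem_closedBall, Real.dist_eq] at hk
  simp only [Real.norm_eq_abs] at hk
  simp only [Pi.zero_apply]
  linarith [neg_abs_le (hA.eigenvalues i - A k k), h k]

theorem IsHermitian.eventually_posSemidef_add_smul_one (hA : A.IsHermitian) :
    ∀ᶠ t : ℝ in atTop, (A + t • 1).PosSemidef := by
  filter_upwards [eventually_ge_atTop (∑ i, ∑ j, |A i j|)] with t ht
  refine (hA.add (isHermitian_one.smul (IsSelfAdjoint.all t))).posSemidef_of_sum_row_le_diag
    fun k => ?_
  have hrow : ∑ j, |A k j| ≤ t :=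
    (single_le_sum (fun i _ => sum_nonneg fun j _ => abs_nonneg (A i j)) (mem_univ k)).trans ht
  rw [← add_sum_erase _ _ (mem_univ k)] at hrow
  have hoff : ∑ j ∈ univ.erase k, |(A + t • 1) k j| = ∑ j ∈ univ.erase k, |A k j| :=
    sum_congr rfl fun j hj => by simp [one_apply_ne' (ne_of_mem_erase hj)]
  rw [hoff]
  simp only [add_apply, smul_apply, one_apply_eq, smul_eq_mul, mul_one]
  linarith [neg_abs_le (A k k)]

end Matrix

section SymMat

variable {n : ℕ}

theorem smul_one_mem_PSD {t : ℝ} (ht : 0 ≤ t) : t • (1 : SymMat n) ∈ PSD n := by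
  simpa [PSD] using Matrix.PosSemidef.one.smul ht

theorem continuous_sub_smul_one (A : SymMat n) :
    Continuous fun t : ℝ => A - t • (1 : SymMat n) := by
  refine continuous_induced_rng.2 ?_
  simp only [Function.comp_def]
  push_cast
  fun_prop

theorem exists_sub_smul_one_notMem {F : Set (SymMat n)} (hpos : F + PSD n ⊆ F)
    (hproper : F ≠ Set.univ) (A : SymMat n) : ∃ t : ℝ≥0, A - (t : ℝ) • 1 ∉ F := by
  obtain ⟨B, hB⟩ := (Set.ne_univ_iff_exists_notMem F).1 hproper
  obtain ⟨t, ht, hPSD⟩ := ((eventually_ge_atTop 0).and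
    (B - A).2.isHermitian.eventually_posSemidef_add_smul_one).exists
  refine ⟨⟨t, ht⟩, fun hmem => hB ?_⟩
  have hB' : (A - t • 1) + (B - A + t • 1) ∈ F :=
    hpos (Set.add_mem_add hmem (by simpa [PSD] using hPSD))
  simpa using hB'

end SymMat

theorem stmt5_general (n : ℕ) (F : Set (SymMat n)) (hcl : IsClosed F)
    (hpos : F + PSD n ⊆ F) (hproper : F ≠ Set.univ) :
    F = frontier F + PSD n := by
  refine subset_antisymm (fun A hA => ?_)
    ((Set.add_subset_add_right hcl.frontier_subset).trans hpos)
  set ray : ℝ≥0 → SymMat n := fun t => A - (t : ℝ) • 1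
  have hray : Continuous ray := (continuous_sub_smul_one A).comp NNReal.continuous_coe
  obtain ⟨T, hT⟩ := exists_sub_smul_one_notMem hpos hproper A
  obtain ⟨t, ht⟩ : (frontier (ray ⁻¹' F)).Nonempty := nonempty_frontier_iff.2
    ⟨⟨0, by simpa [ray] using hA⟩, (Set.ne_univ_iff_exists_notMem _).2 ⟨T, hT⟩⟩
  exact ⟨ray t, hray.frontier_preimage_subset F ht, (t : ℝ) • 1, smul_one_mem_PSD t.2,
    by simp [ray]⟩

theorem stmt5 (n : ℕ) (F : Set (SymMat n)) (hcl : IsClosed F)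
    (hpos : F + PSD n ⊆ F) (hne : F.Nonempty) (hproper : F ≠ Set.univ) :
    F = frontier F + PSD n :=
  stmt5_general n F hcl hpos hproper
end

section
/- For any nonempty proper subequation F ⊆ Sym²(ℝⁿ), the Dirichlet dual satisfies F̃ = −∂F + P. -/
/-!
If `-A ∉ int F`, pick `y ∈ F` with `y + A ≥ 0` (possible because `F` is nonempty, stable under
adding `P`, and every symmetric matrix is dominated by a positive semidefinite one). The segment
from `-A` to `y` stays in `-A + P` and meets `F`, so by connectedness it meets `∂F` at some `B`,
giving `A = -B + (B + A)`. Conversely `int F + P ⊆ int F`, so `-(-B + Q) ∈ int F` would force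
`-B ∈ int F`.
-/

open Topology Pointwise

theorem IsPreconnected.inter_frontier_nonempty {X : Type*} [TopologicalSpace X] {s t : Set X}
    (hs : IsPreconnected s) (hst : (s ∩ t).Nonempty) (hsdt : (s \ t).Nonempty) :
    (s ∩ frontier t).Nonempty := by
  by_contra h
  have hcover : s ⊆ interior t ∪ interior tᶜ := fun a ha ↦
    compl_frontier_eq_union_interior (s := t) ▸ fun hf ↦ h ⟨a, ha, hf⟩
  obtain ⟨a, has, hat⟩ := hst
  obtain ⟨b, hbs, hbt⟩ := hsdt
  have ha : a ∈ interior t :=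
    (hcover has).resolve_right fun ha ↦ interior_subset ha hat
  have hb : b ∈ interior tᶜ :=
    (hcover hbs).resolve_left fun hb ↦ hbt (interior_subset hb)
  obtain ⟨c, -, hct, hcnt⟩ :=
    hs _ _ isOpen_interior isOpen_interior hcover ⟨a, has, ha⟩ ⟨b, hbs, hb⟩
  exact interior_subset hcnt (interior_subset hct)

theorem interior_add_subset_interior {G : Type*} [AddGroup G] [TopologicalSpace G]
    [IsTopologicalAddGroup G] {F P : Set G} (hFP : F + P ⊆ F) : interior F + P ⊆ interior F :=
  interior_maximal ((Set.add_subset_add_right interior_subset).trans hFP)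
    isOpen_interior.add_right

theorem exists_mem_sub_mem_of_add_subset {V : Type*} [AddCommGroup V] {F P : Set V}
    (hF : F.Nonempty) (hFP : F + P ⊆ F) (hP : ∀ S, ∃ Q ∈ P, Q - S ∈ P) (x : V) :
    ∃ y ∈ F, y - x ∈ P := by
  obtain ⟨C, hC⟩ := hF
  obtain ⟨Q, hQ, hQx⟩ := hP (x - C)
  exact ⟨C + Q, hFP (Set.add_mem_add hC hQ), by rwa [sub_sub_eq_add_sub, add_comm] at hQx⟩

section Cone

variable {V : Type*} [AddCommGroup V] [Module ℝ V] [TopologicalSpace V]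
  [IsTopologicalAddGroup V] [ContinuousSMul ℝ V] {F P : Set V}

theorem exists_mem_frontier_mem_segment {x y : V} (hx : x ∉ interior F) (hy : y ∈ F) :
    ∃ b ∈ segment ℝ x y, b ∈ frontier F := by
  by_cases hxF : x ∈ F
  · exact ⟨x, left_mem_segment ℝ x y, subset_closure hxF, hx⟩
  · exact (convex_segment x y).isPreconnected.inter_frontier_nonempty
      ⟨y, right_mem_segment ℝ x y, hy⟩ ⟨x, left_mem_segment ℝ x y, hxF⟩

theorem neg_notMem_interior_iff_mem_neg_frontier_add (hF : F.Nonempty) (hFP : F + P ⊆ F)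
    (hPsmul : ∀ c : ℝ, 0 ≤ c → ∀ Q ∈ P, c • Q ∈ P) (hP : ∀ S, ∃ Q ∈ P, Q - S ∈ P) (A : V) :
    -A ∉ interior F ↔ A ∈ -frontier F + P := by
  constructor
  · intro hA
    obtain ⟨y, hyF, hyA⟩ := exists_mem_sub_mem_of_add_subset hF hFP hP (-A)
    obtain ⟨b, hb, hbF⟩ := exists_mem_frontier_mem_segment hA hyF
    rw [segment_eq_image'] at hb
    obtain ⟨θ, hθ, rfl⟩ := hb
    refine ⟨-(-A + θ • (y - -A)), by simpa using hbF, θ • (y - -A), hPsmul θ hθ.1 _ hyA, ?_⟩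
    beta_reduce
    abel
  · rintro ⟨b, hb, Q, hQ, rfl⟩ hA
    have hQb := interior_add_subset_interior hFP (Set.add_mem_add hA hQ)
    rw [neg_add_rev, neg_add_cancel_comm] at hQb
    exact hb.2 hQb

end Cone

open Matrix ComplexOrder in
theorem Matrix.IsHermitian.exists_posSemidef_sub {ι 𝕜 : Type*} [Fintype ι] [DecidableEq ι]
    [RCLike 𝕜] {S : Matrix ι ι 𝕜} (hS : S.IsHermitian) :
    ∃ Q : Matrix ι ι 𝕜, Q.PosSemidef ∧ (Q - S).PosSemidef := by
  have hsq : ∀ X : Matrix ι ι 𝕜, X.IsHermitian → ((4⁻¹ : ℝ) • (X * X)).PosSemidef := fun X hX ↦ by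
    simpa only [hX.eq] using
      (posSemidef_conjTranspose_mul_self X).smul (by norm_num : (0 : ℝ) ≤ 4⁻¹)
  refine ⟨(4⁻¹ : ℝ) • ((S + 1) * (S + 1)), hsq _ (hS.add isHermitian_one), ?_⟩
  have hdiff : (4⁻¹ : ℝ) • ((S + 1) * (S + 1)) - S = (4⁻¹ : ℝ) • ((S - 1) * (S - 1)) := by
    simp only [add_mul, mul_add, sub_mul, mul_sub, mul_one, one_mul]
    module
  rw [hdiff]
  exact hsq _ (hS.sub isHermitian_one)

instance selfAdjoint.continuousSMul {R A : Type*} [Semiring R] [StarMul R] [TrivialStar R]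
    [TopologicalSpace R] [AddCommGroup A] [Module R A] [StarAddMonoid A] [StarModule R A]
    [TopologicalSpace A] [ContinuousSMul R A] : ContinuousSMul R (selfAdjoint A) :=
  ⟨continuous_induced_rng.2 (continuous_fst.smul (continuous_subtype_val.comp continuous_snd))⟩

theorem smul_mem_PSD {n : ℕ} (c : ℝ) (hc : 0 ≤ c) (Q : SymMat n) (hQ : Q ∈ PSD n) :
    c • Q ∈ PSD n :=
  Matrix.PosSemidef.smul hQ hc

theorem exists_mem_PSD_sub_mem_PSD {n : ℕ} (S : SymMat n) : ∃ Q ∈ PSD n, Q - S ∈ PSD n := by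
  obtain ⟨Q, hQ, hQS⟩ := S.2.isHermitian.exists_posSemidef_sub
  exact ⟨⟨Q, hQ.isHermitian⟩, hQ, hQS⟩

theorem stmt6_general (n : ℕ) (F : Set (SymMat n))
    (hpos : F + PSD n ⊆ F) (hne : F.Nonempty) :
    dual F = -(frontier F) + PSD n :=
  Set.ext (neg_notMem_interior_iff_mem_neg_frontier_add hne hpos smul_mem_PSD
    exists_mem_PSD_sub_mem_PSD)

theorem stmt6 (n : ℕ) (F : Set (SymMat n)) (hcl : IsClosed F)
    (hpos : F + PSD n ⊆ F) (hne : F.Nonempty) (hproper : F ≠ Set.univ) :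
    dual F = -(frontier F) + PSD n :=
  stmt6_general n F hpos hne
end

section
/- Let H = E ∩ (−G̃) be a generalized equation defined by subequations E, G. Then interior H = (interior E) ∩ (complement of G), and consequently interior H = ∅ if and only if E ⊆ G. -/
open Topology Pointwise

theorem stmt10 (n : ℕ) (E G : Set (SymMat n))
    (hEcl : IsClosed E) (hEpos : E + PSD n ⊆ E) (hEne : E.Nonempty)
    (hEproper : E ≠ Set.univ) (hEreg : E = closure (interior E))
    (hGcl : IsClosed G) (hGpos : G + PSD n ⊆ G) (hGne : G.Nonempty)
    (hGproper : G ≠ Set.univ) (hGreg : G = closure (interior G)) :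
    interior (E ∩ -(dual G)) = interior E ∩ Gᶜ ∧
      (interior (E ∩ -(dual G)) = ∅ ↔ E ⊆ G) := by
  have hneg : -(dual G) = (interior G)ᶜ := by
    ext A
    simp [dual, Set.mem_neg]
  have h1 : interior (E ∩ -(dual G)) = interior E ∩ Gᶜ := by
    rw [hneg, interior_inter, interior_compl, ← hGreg]
  refine ⟨h1, ?_⟩
  rw [h1]
  constructor
  · intro h
    have hsub : interior E ⊆ G := by
      intro x hx
      by_contra hxG
      exact Set.eq_empty_iff_forall_notMem.mp h x ⟨hx, hxG⟩
    calc E = closure (interior E) := hEreg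
      _ ⊆ closure G := closure_mono hsub
      _ = G := hGcl.closure_eq
  · intro h
    apply Set.eq_empty_iff_forall_notMem.mpr
    rintro x ⟨hx, hxG⟩
    exact hxG (h (interior_subset hx))
end

section
/- Let E, G be subequations with E = closure(interior E), G = closure(interior G), and let H = E ∩ (−G̃). If interior H = ∅, then H = ∂E ∩ ∂G, the intersection of the topological boundaries of E and G. -/
open Topology Pointwise

theorem stmt11 (n : ℕ) (E G : Set (SymMat n))
    (hEcl : IsClosed E) (hEpos : E + PSD n ⊆ E) (hEreg : E = closure (interior E))
    (hGcl : IsClosed G) (hGpos : G + PSD n ⊆ G) (hGreg : G = closure (interior G))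
    (hempty : interior (E ∩ -(dual G)) = ∅) :
    E ∩ -(dual G) = frontier E ∩ frontier G := by
  have hneg : -(dual G) = (interior G)ᶜ := by
    ext A
    simp [dual, Set.mem_neg]
  rw [hneg] at hempty ⊢
  -- interior E ∩ Gᶜ is an open subset of E ∩ (interior G)ᶜ, hence empty
  have h2 : interior E ⊆ G := by
    intro x hx
    by_contra hxG
    have hsub : interior E ∩ Gᶜ ⊆ interior (E ∩ (interior G)ᶜ) :=
      interior_maximal
        (fun y ⟨hy1, hy2⟩ => ⟨interior_subset hy1, fun h => hy2 (interior_subset h)⟩)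
        (isOpen_interior.inter hGcl.isOpen_compl)
    have := hsub ⟨hx, hxG⟩
    rw [hempty] at this
    exact this
  have hsub : interior E ⊆ interior G := interior_maximal h2 isOpen_interior
  ext x
  rw [hEcl.frontier_eq, hGcl.frontier_eq]
  constructor
  · rintro ⟨hxE, hxG⟩
    have hxnE : x ∉ interior E := fun h => hxG (hsub h)
    have hxG' : x ∈ G := by
      have : closure (interior E) ⊆ closure G := closure_mono h2
      rw [hGcl.closure_eq] at this
      exact this (hEreg ▸ hxE)
    exact ⟨⟨hxE, hxnE⟩, ⟨hxG', hxG⟩⟩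
  · rintro ⟨⟨hxE, _⟩, ⟨_, hxG⟩⟩
    exact ⟨hxE, hxG⟩
end

section
/- Suppose F is a subequation and H = ∂F. If H = E ∩ (−G̃) for subequations E and G (where G̃ is the Dirichlet dual of G), then E = G = F. That is, the defining pair of a determined equation is unique. -/
/-!
Everything is read off along the lines `t ↦ A + t • 1`. As the identity lies in the interior of
the PSD cone, such a line meets a subequation `F` in a closed half-line `[s, ∞)` whose endpoint
lies on `∂F`, and `A + t • 1 ∈ int F` whenever `A ∈ F` and `t > 0`. Now `∂F = E ∩ -G̃` says
`∂F = E \ int G`. A point of `G \ F` would give an endpoint on `∂F` inside `int G`, so `G ⊆ F`;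
pushing the endpoints (in `∂F ⊆ E`) up by `PSD` gives `F ⊆ E`; a point of `E \ F` is off `∂F`,
hence in `int G ⊆ F`. Finally for `A ∈ F` the points `A + t • 1`, `t > 0`, lie in `int F ⊆ E` but
off `∂F`, hence in `G`, and `A ∈ G` because `G` is closed.
-/

open Topology Pointwise

open Matrix

open scoped Matrix.Norms.L2Operator RealInnerProductSpace in
theorem Matrix.PosSemidef.smul_one_add_of_norm_le {m : Type*} [Fintype m] [DecidableEq m]
    {C : Matrix m m ℝ} (hC : C.IsHermitian) {t : ℝ} (h : ‖C‖ ≤ t) :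
    (t • 1 + C).PosSemidef := by
  refine .of_dotProduct_mulVec_nonneg ((isHermitian_one.smul (.all t)).add hC) fun x => ?_
  set y := WithLp.toLp 2 x
  have hxx : x ⬝ᵥ x = ‖y‖ ^ 2 := by
    rw [← real_inner_self_eq_norm_sq, EuclideanSpace.inner_eq_star_dotProduct]
    simp [y]
  have hxCx : -(‖C‖ * ‖y‖ ^ 2) ≤ x ⬝ᵥ C *ᵥ x := by
    rw [← inner_toEuclideanCLM]
    calc -(‖C‖ * ‖y‖ ^ 2) ≤ -(‖y‖ * ‖toEuclideanCLM (n := m) (𝕜 := ℝ) C y‖) := by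
          rw [neg_le_neg_iff, sq, ← mul_assoc, mul_comm ‖C‖, mul_assoc]
          exact mul_le_mul_of_nonneg_left ((toEuclideanCLM (n := m) (𝕜 := ℝ) C).le_opNorm y)
            (norm_nonneg y)
      _ ≤ _ := neg_le_of_abs_le (abs_real_inner_le_norm _ _)
  simp only [star_trivial, add_mulVec, smul_mulVec, one_mulVec, dotProduct_add,
    dotProduct_smul, smul_eq_mul, hxx]
  nlinarith [sq_nonneg ‖y‖]

namespace SymMat

variable {n : ℕ} {F : Set (SymMat n)} {A : SymMat n}

theorem smul_one_mem_PSD {t : ℝ} (ht : 0 ≤ t) : t • (1 : SymMat n) ∈ PSD n :=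
  PosSemidef.one.smul ht

open scoped Matrix.Norms.L2Operator in
theorem smul_one_add_mem_PSD_of_norm_le {D : SymMat n} {t : ℝ}
    (h : ‖(D : Matrix (Fin n) (Fin n) ℝ)‖ ≤ t) : t • 1 + D ∈ PSD n :=
  PosSemidef.smul_one_add_of_norm_le D.2 h

open scoped Matrix.Norms.L2Operator in
theorem exists_smul_one_add_mem_PSD (D : SymMat n) : ∃ r : ℝ, ∀ t, r ≤ t → t • 1 + D ∈ PSD n :=
  ⟨_, fun _ ht => smul_one_add_mem_PSD_of_norm_le ht⟩

theorem add_smul_one_mem (hF : F + PSD n ⊆ F) (hA : A ∈ F) {t : ℝ} (ht : 0 ≤ t) :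
    A + t • 1 ∈ F :=
  hF (Set.add_mem_add hA (smul_one_mem_PSD ht))

open scoped Matrix.Norms.L2Operator in
theorem add_smul_one_mem_interior (hF : F + PSD n ⊆ F) (hA : A ∈ F) {t : ℝ} (ht : 0 < t) :
    A + t • 1 ∈ interior F := by
  rw [mem_interior]
  refine ⟨{B | ‖((B - (A + t • 1) : SymMat n) : Matrix (Fin n) (Fin n) ℝ)‖ < t}, fun B hB => ?_,
    isOpen_lt (by fun_prop) continuous_const, by simpa⟩
  rw [← add_sub_cancel A B, ← sub_add_cancel (B - A) (t • 1), sub_sub, add_comm _ (t • 1)]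
  exact hF (Set.add_mem_add hA (smul_one_add_mem_PSD_of_norm_le hB.le))

theorem continuous_add_smul_one (A : SymMat n) : Continuous fun t : ℝ => A + t • (1 : SymMat n) :=
  continuous_induced_rng.2 (by fun_prop)

theorem mem_of_forall_add_smul_one_mem (hF : IsClosed F) (h : ∀ t : ℝ, 0 < t → A + t • 1 ∈ F) :
    A ∈ F := by
  have h0 : (0 : ℝ) ∈ closure (Set.Ioi 0) := by simp
  simpa using hF.closure_subset (map_mem_closure (continuous_add_smul_one A) h0 fun t ht => h t ht)

theorem nonempty_setOf_add_smul_one_mem (hF : F + PSD n ⊆ F) (hne : F.Nonempty)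
    (A : SymMat n) : {t : ℝ | A + t • 1 ∈ F}.Nonempty := by
  obtain ⟨B, hB⟩ := hne
  obtain ⟨r, hr⟩ := exists_smul_one_add_mem_PSD (A - B)
  refine ⟨r, show A + r • 1 ∈ F from ?_⟩
  convert hF (Set.add_mem_add hB (hr r le_rfl)) using 1
  abel

theorem bddBelow_setOf_add_smul_one_mem (hF : F + PSD n ⊆ F) (hproper : F ≠ Set.univ)
    (A : SymMat n) : BddBelow {t : ℝ | A + t • 1 ∈ F} := by
  obtain ⟨B, hB⟩ := (Set.ne_univ_iff_exists_notMem F).1 hproper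
  obtain ⟨r, hr⟩ := exists_smul_one_add_mem_PSD (B - A)
  refine ⟨-r, fun t ht => ?_⟩
  by_contra! hlt
  have hD := hr (-t) (le_neg_of_le_neg hlt.le)
  exact hB (by simpa [add_comm, add_assoc] using hF (Set.add_mem_add ht hD))

theorem exists_add_smul_one_mem_frontier (hFcl : IsClosed F) (hF : F + PSD n ⊆ F)
    (hne : F.Nonempty) (hproper : F ≠ Set.univ) (A : SymMat n) :
    ∃ s : ℝ, A + s • 1 ∈ frontier F ∧ ∀ t, A + t • 1 ∈ F ↔ s ≤ t := by
  have hbdd := bddBelow_setOf_add_smul_one_mem hF hproper A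
  have hs : sInf {t : ℝ | A + t • 1 ∈ F} ∈ {t : ℝ | A + t • 1 ∈ F} :=
    (hFcl.preimage (continuous_add_smul_one A)).csInf_mem
      (nonempty_setOf_add_smul_one_mem hF hne A) hbdd
  set s := sInf {t : ℝ | A + t • 1 ∈ F}
  have hline : ∀ t, A + t • 1 ∈ F ↔ s ≤ t := fun t =>
    ⟨fun ht => csInf_le hbdd ht,
      fun hst => by simpa [add_assoc, ← add_smul] using add_smul_one_mem hF hs (sub_nonneg.2 hst)⟩
  refine ⟨s, ?_, hline⟩
  rw [frontier_eq_closure_inter_closure]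
  refine ⟨subset_closure hs, map_mem_closure (f := fun t : ℝ => A + t • (1 : SymMat n))
    (continuous_add_smul_one A) (s := Set.Iio s) ?_ fun t ht => ?_⟩
  · simp
  · exact fun htF => not_le.2 ht ((hline t).1 htF)

end SymMat

open SymMat in
theorem stmt14_general (n : ℕ) (F E G : Set (SymMat n))
    (hFcl : IsClosed F) (hFpos : F + PSD n ⊆ F) (hFne : F.Nonempty) (hFproper : F ≠ Set.univ)
    (hEpos : E + PSD n ⊆ E)
    (hGcl : IsClosed G) (hGpos : G + PSD n ⊆ G)
    (h : frontier F = E ∩ -(dual G)) :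
    E = F ∧ G = F := by
  have hfr : ∀ X, X ∈ frontier F ↔ X ∈ E ∧ X ∉ interior G := fun X => by
    simp [h, dual]
  have hline := exists_add_smul_one_mem_frontier hFcl hFpos hFne hFproper
  have hGF : G ⊆ F := fun A hA => by
    by_contra hAF
    obtain ⟨s, hs, hsF⟩ := hline A
    have hs0 : 0 < s := not_le.1 fun hs0 => hAF (by simpa using (hsF 0).2 hs0)
    exact ((hfr _).1 hs).2 (add_smul_one_mem_interior hGpos hA hs0)
  have hFE : F ⊆ E := fun A hA => by
    obtain ⟨s, hs, hsF⟩ := hline A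
    have hs0 : s ≤ 0 := (hsF 0).1 (by simpa using hA)
    simpa using add_smul_one_mem hEpos ((hfr _).1 hs).1 (neg_nonneg.2 hs0)
  have hEF : E ⊆ F := fun A hA => by
    by_contra hAF
    have hnfr : A ∉ frontier F := fun hA' => hAF (hFcl.frontier_subset hA')
    rw [hfr, not_and, not_not] at hnfr
    exact hAF (hGF (interior_subset (hnfr hA)))
  have hFG : F ⊆ G := fun A hA => mem_of_forall_add_smul_one_mem hGcl fun t ht => by
    have hint := add_smul_one_mem_interior hFpos hA ht
    have hnfr : A + t • 1 ∉ frontier F := fun hA' => hA'.2 hint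
    rw [hfr, not_and, not_not] at hnfr
    exact interior_subset (hnfr (hFE (interior_subset hint)))
  exact ⟨hEF.antisymm hFE, hGF.antisymm hFG⟩

theorem stmt14 (n : ℕ) (F E G : Set (SymMat n))
    (hFcl : IsClosed F) (hFpos : F + PSD n ⊆ F) (hFne : F.Nonempty) (hFproper : F ≠ Set.univ)
    (hEcl : IsClosed E) (hEpos : E + PSD n ⊆ E) (hEne : E.Nonempty) (hEproper : E ≠ Set.univ)
    (hGcl : IsClosed G) (hGpos : G + PSD n ⊆ G) (hGne : G.Nonempty) (hGproper : G ≠ Set.univ)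
    (h : frontier F = E ∩ -(dual G)) :
    E = F ∧ G = F :=
  stmt14_general n F E G hFcl hFpos hFne hFproper hEpos hGcl hGpos h
end

section
/- A closed subset H ⊆ Sym²(ℝⁿ) is a generalized equation (i.e., H = E ∩ (−G̃) for some pair of subequations E, G) if and only if H = closure(H + P) ∩ closure(H − P). -/
open Topology Pointwise

/-! If `H = E ∩ (interior G)ᶜ` with `E`, `G` subequations, then the closed set `E` absorbs
`closure (H + P)`, and the closed set `(interior G)ᶜ = -G̃`, being stable under subtracting `P`,
absorbs `closure (H - P)`. Conversely, put `C = closure (H - P)`, `E = closure (H + P)` and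
`G = closure Cᶜ`. The open set `Cᶜ` is stable under adding `P`, and an open set `U` with
`U + P ⊆ U` is the interior of its closure as soon as `P` has interior points `t • 1` arbitrarily
close to `0`: a point `A` of `interior (closure U)` has `A - p ∈ closure U` for such a `p`, and
`closure U + interior P ⊆ U`. Hence `-G̃ = (interior G)ᶜ = C`. -/

open Set

section AddGroup

variable {M : Type*} [AddGroup M] {S T : Set M}

theorem compl_add_subset_compl (h : S - T ⊆ S) : Sᶜ + T ⊆ Sᶜ := by
  rintro _ ⟨a, ha, p, hp, rfl⟩ hap
  exact ha (by simpa using h (sub_mem_sub hap hp))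

theorem compl_sub_subset_compl (h : S + T ⊆ S) : Sᶜ - T ⊆ Sᶜ := by
  rintro _ ⟨a, ha, p, hp, rfl⟩ hap
  exact ha (by simpa using h (add_mem_add hap hp))

end AddGroup

section TopologicalAddGroup

variable {M : Type*} [AddCommGroup M] [TopologicalSpace M] [IsTopologicalAddGroup M]

theorem closure_add_subset_closure {S T : Set M} (h : S + T ⊆ S) :
    closure S + T ⊆ closure S := by
  rintro _ ⟨a, ha, p, hp, rfl⟩
  exact map_mem_closure (f := (· + p)) (continuous_add_const p) ha
    fun x hx => h (add_mem_add hx hp)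

theorem closure_sub_subset_closure {S T : Set M} (h : S - T ⊆ S) :
    closure S - T ⊆ closure S := by
  rw [sub_eq_add_neg] at h ⊢
  exact closure_add_subset_closure h

theorem interior_add_subset_interior_s16 {S T : Set M} (h : S + T ⊆ S) :
    interior S + T ⊆ interior S :=
  subset_interior_add_left.trans (interior_mono h)

theorem interior_closure_subset_of_add_subset {U P : Set M} (hU : U + P ⊆ U)
    (hP : (0 : M) ∈ closure (interior P)) : interior (closure U) ⊆ U := by
  intro A hA
  have hnhds : (fun p => A - p) ⁻¹' interior (closure U) ∈ 𝓝 (0 : M) :=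
    (continuous_const.sub continuous_id).continuousAt.preimage_mem_nhds
      (by simpa using isOpen_interior.mem_nhds hA)
  obtain ⟨p, hpA, hp⟩ := mem_closure_iff_nhds.mp hP _ hnhds
  have : A ∈ closure U + interior P := ⟨A - p, interior_subset hpA, p, hp, sub_add_cancel A p⟩
  rw [isOpen_interior.closure_add] at this
  exact hU (add_subset_add_left interior_subset this)

theorem IsOpen.interior_closure_eq_of_add_subset {U P : Set M} (hUo : IsOpen U) (hU : U + P ⊆ U)
    (hP : (0 : M) ∈ closure (interior P)) : interior (closure U) = U :=
  (interior_closure_subset_of_add_subset hU hP).antisymm hUo.subset_interior_closure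

theorem exists_eq_inter_compl_interior_iff (P : AddSubmonoid M)
    (hP : (0 : M) ∈ closure (interior (P : Set M))) (H : Set M) :
    (∃ E G : Set M, IsClosed E ∧ E + (P : Set M) ⊆ E ∧ IsClosed G ∧ G + (P : Set M) ⊆ G ∧
        H = E ∩ (interior G)ᶜ) ↔
      H = closure (H + (P : Set M)) ∩ closure (H - (P : Set M)) := by
  have hPP : (P : Set M) + P = P := P.coe_add_self_eq
  constructor
  · rintro ⟨E, G, hE, hEP, -, hGP, rfl⟩
    refine (subset_inter (subset_closure.trans' (subset_add_left _ P.zero_mem))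
      (subset_closure.trans' (subset_sub_left P.zero_mem))).antisymm
      (inter_subset_inter (closure_minimal ?_ hE)
        (closure_minimal ?_ isOpen_interior.isClosed_compl))
    · exact (add_subset_add_right inter_subset_left).trans hEP
    · exact (sub_subset_sub_right inter_subset_right).trans
        (compl_sub_subset_compl (interior_add_subset_interior_s16 hGP))
  · intro hH
    set C := closure (H - (P : Set M))
    have hCP : C - P ⊆ C := closure_sub_subset_closure (by rw [sub_sub, hPP])
    have hCcP : Cᶜ + P ⊆ Cᶜ := compl_add_subset_compl hCP
    refine ⟨closure (H + (P : Set M)), closure Cᶜ, isClosed_closure,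
      closure_add_subset_closure (by rw [add_assoc, hPP]), isClosed_closure,
      closure_add_subset_closure hCcP, ?_⟩
    rwa [isClosed_closure.isOpen_compl.interior_closure_eq_of_add_subset hCcP hP, compl_compl]

end TopologicalAddGroup

open scoped RealInnerProductSpace in
theorem ContinuousLinearMap.inner_apply_self_nonneg_of_norm_sub_smul_one_le {E : Type*}
    [NormedAddCommGroup E] [InnerProductSpace ℝ E] {T : E →L[ℝ] E} {t : ℝ}
    (hT : ‖T - t • 1‖ ≤ t) (y : E) : 0 ≤ ⟪y, T y⟫ := by
  have hsplit : ⟪y, T y⟫ = t * ‖y‖ ^ 2 + ⟪y, (T - t • 1) y⟫ := by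
    simp [inner_sub_right, inner_smul_right]
  have hbound : |⟪y, (T - t • 1) y⟫| ≤ t * ‖y‖ ^ 2 :=
    calc |⟪y, (T - t • 1) y⟫| ≤ ‖y‖ * ‖(T - t • 1) y‖ := abs_real_inner_le_norm _ _
      _ ≤ ‖y‖ * (t * ‖y‖) := by gcongr; exact (T - t • 1).le_of_opNorm_le hT y
      _ = t * ‖y‖ ^ 2 := by ring
  linarith [neg_abs_le ⟪y, (T - t • 1) y⟫]

namespace SymMat

variable (n : ℕ)

def psdCone : AddSubmonoid (SymMat n) where
  carrier := PSD n
  zero_mem' := Matrix.PosSemidef.zero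
  add_mem' := Matrix.PosSemidef.add

theorem coe_psdCone : (psdCone n : Set (SymMat n)) = PSD n := rfl

theorem continuous_toEuclideanCLM :
    Continuous fun B : SymMat n => Matrix.toEuclideanCLM (𝕜 := ℝ) (B : Matrix (Fin n) (Fin n) ℝ) :=
  (LinearMap.continuous_of_finiteDimensional
    (Matrix.toEuclideanCLM (n := Fin n) (𝕜 := ℝ)).toAlgEquiv.toLinearMap).comp
    continuous_subtype_val

theorem smul_one_mem_interior_psd {t : ℝ} (ht : 0 < t) :
    (t • 1 : SymMat n) ∈ interior (PSD n) := by
  refine interior_maximal ?_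
    ((Metric.isOpen_ball (x := t • 1) (ε := t)).preimage (continuous_toEuclideanCLM n)) ?_
  · intro B hB
    refine Matrix.PosSemidef.of_dotProduct_mulVec_nonneg B.2 fun x => ?_
    have hquad := ContinuousLinearMap.inner_apply_self_nonneg_of_norm_sub_smul_one_le
      (mem_ball_iff_norm.mp hB).le (WithLp.toLp 2 x)
    rw [star_trivial]
    rwa [Matrix.inner_toEuclideanCLM, WithLp.ofLp_toLp] at hquad
  · simpa using ht

theorem zero_mem_closure_interior_psd : (0 : SymMat n) ∈ closure (interior (PSD n)) := by
  have hcont : Continuous fun t : ℝ => (t • 1 : SymMat n) :=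
    (continuous_id.smul continuous_const).subtype_mk fun t => (t • 1 : SymMat n).2
  have hlim : Filter.Tendsto (fun t : ℝ => (t • 1 : SymMat n)) (𝓝[>] 0) (𝓝 0) := by
    simpa using (hcont.tendsto 0).mono_left nhdsWithin_le_nhds
  exact mem_closure_of_tendsto hlim (eventually_nhdsWithin_of_forall fun t ht =>
    smul_one_mem_interior_psd n ht)

theorem neg_dual (G : Set (SymMat n)) : -dual G = (interior G)ᶜ := by
  ext A
  simp [dual]

end SymMat

theorem stmt16_general (n : ℕ) (H : Set (SymMat n)) :
    (∃ E G : Set (SymMat n), IsClosed E ∧ E + PSD n ⊆ E ∧ IsClosed G ∧ G + PSD n ⊆ G ∧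
        H = E ∩ -(dual G)) ↔
      H = closure (H + PSD n) ∩ closure (H - PSD n) := by
  simp only [SymMat.neg_dual, ← SymMat.coe_psdCone]
  exact exists_eq_inter_compl_interior_iff _ (SymMat.zero_mem_closure_interior_psd n) H

theorem stmt16 (n : ℕ) (H : Set (SymMat n)) (hcl : IsClosed H) :
    (∃ E G : Set (SymMat n), IsClosed E ∧ E + PSD n ⊆ E ∧ IsClosed G ∧ G + PSD n ⊆ G ∧
        H = E ∩ -(dual G)) ↔
      H = closure (H + PSD n) ∩ closure (H - PSD n) :=
  stmt16_general n H
end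

section
/- For any closed subset H ⊆ Sym²(ℝⁿ), the set H◇ := closure(H + P) ∩ closure(H − P) is the smallest generalized equation containing H: H◇ contains H, H◇ satisfies H◇ = closure(H◇ + P) ∩ closure(H◇ − P), and if E, G are subequations with H ⊆ E ∩ (−G̃), then H◇ ⊆ E ∩ (−G̃). -/
open Topology Pointwise

lemma psd_zero (n : ℕ) : (0 : SymMat n) ∈ PSD n := by
  simpa [PSD] using (Matrix.PosSemidef.zero : (0 : Matrix (Fin n) (Fin n) ℝ).PosSemidef)

lemma psd_add {n : ℕ} {a b : SymMat n} (ha : a ∈ PSD n) (hb : b ∈ PSD n) :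
    a + b ∈ PSD n := by
  simpa [PSD] using Matrix.PosSemidef.add ha hb

lemma closure_add_psd {n : ℕ} (S : Set (SymMat n)) :
    closure S + PSD n ⊆ closure (S + PSD n) := by
  rintro x ⟨a, ha, b, hb, rfl⟩
  exact map_mem_closure (f := fun y => y + b) (continuous_add_right b) ha
    (fun y hy => ⟨y, hy, b, hb, rfl⟩)

lemma closure_sub_psd {n : ℕ} (S : Set (SymMat n)) :
    closure S - PSD n ⊆ closure (S - PSD n) := by
  rintro x ⟨a, ha, b, hb, rfl⟩
  exact map_mem_closure (f := fun y => y - b) (continuous_sub_right b) ha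
    (fun y hy => ⟨y, hy, b, hb, rfl⟩)

lemma interior_add_psd {n : ℕ} {G : Set (SymMat n)} (hG : G + PSD n ⊆ G) :
    interior G + PSD n ⊆ interior G :=
  interior_maximal
    (subset_trans (Set.add_subset_add_right interior_subset) hG)
    (isOpen_interior.add_right)

lemma neg_dual_eq {n : ℕ} (G : Set (SymMat n)) : -(dual G) = (interior G)ᶜ := by
  ext x
  simp [dual, Set.mem_neg]

theorem stmt17 (n : ℕ) (H : Set (SymMat n)) (hcl : IsClosed H) :
    H ⊆ closure (H + PSD n) ∩ closure (H - PSD n) ∧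
    closure (H + PSD n) ∩ closure (H - PSD n) =
      closure ((closure (H + PSD n) ∩ closure (H - PSD n)) + PSD n) ∩
        closure ((closure (H + PSD n) ∩ closure (H - PSD n)) - PSD n) ∧
    ∀ E G : Set (SymMat n), IsClosed E → E + PSD n ⊆ E → IsClosed G → G + PSD n ⊆ G →
      H ⊆ E ∩ -(dual G) →
        closure (H + PSD n) ∩ closure (H - PSD n) ⊆ E ∩ -(dual G) := by
  have h0 := psd_zero n
  have hself : ∀ S : Set (SymMat n),
      S ⊆ closure (S + PSD n) ∩ closure (S - PSD n) := by
    intro S x hx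
    exact ⟨subset_closure ⟨x, hx, 0, h0, by simp⟩,
      subset_closure ⟨x, hx, 0, h0, by simp⟩⟩
  refine ⟨hself H, ?_, ?_⟩
  · set D := closure (H + PSD n) ∩ closure (H - PSD n) with hD
    apply subset_antisymm (hself D)
    have step_add : (H + PSD n) + PSD n ⊆ H + PSD n := by
      rintro x ⟨_, ⟨h, hh, p, hp, rfl⟩, q, hq, rfl⟩
      exact ⟨h, hh, p + q, psd_add hp hq, (add_assoc h p q).symm⟩
    have step_sub : (H - PSD n) - PSD n ⊆ H - PSD n := by
      rintro x ⟨_, ⟨h, hh, p, hp, rfl⟩, q, hq, rfl⟩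
      exact ⟨h, hh, p + q, psd_add hp hq, (sub_sub h p q).symm⟩
    apply Set.inter_subset_inter
    · have h1 : D + PSD n ⊆ closure (H + PSD n) := by
        refine subset_trans (Set.add_subset_add_right Set.inter_subset_left) ?_
        exact subset_trans (closure_add_psd _) (closure_mono step_add)
      simpa using closure_minimal h1 isClosed_closure
    · have h1 : D - PSD n ⊆ closure (H - PSD n) := by
        refine subset_trans (Set.sub_subset_sub_right Set.inter_subset_right) ?_
        exact subset_trans (closure_sub_psd _) (closure_mono step_sub)
      simpa using closure_minimal h1 isClosed_closure
  · intro E G hE hEP hG hGP hsub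
    have hE' : closure (H + PSD n) ⊆ E := by
      apply closure_minimal ?_ hE
      rintro x ⟨h, hh, p, hp, rfl⟩
      exact hEP ⟨h, (hsub hh).1, p, hp, rfl⟩
    have hG' : closure (H - PSD n) ⊆ (interior G)ᶜ := by
      apply closure_minimal ?_ isOpen_interior.isClosed_compl
      rintro x ⟨h, hh, p, hp, rfl⟩
      intro hmem
      have hhG : h ∉ interior G := by
        have := (hsub hh).2
        rw [neg_dual_eq] at this
        exact this
      exact hhG (by
        have : (h - p) + p ∈ interior G :=
          interior_add_psd hGP ⟨h - p, hmem, p, hp, rfl⟩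
        simpa using this)
    intro x hx
    refine ⟨hE' hx.1, ?_⟩
    rw [neg_dual_eq]
    exact hG' hx.2
end

section
/- If H is a nonempty closed subset of the trace-zero hyperplane {A ∈ Sym²(ℝⁿ) : tr A = 0}, then H + P is closed (hence a subequation), H − P is closed, and H = (H + P) ∩ (H − P). -/
/-!
Write `T` for the trace. It is additive and continuous, vanishes on `H`, is nonnegative on the
PSD cone `P`, and its sublevel sets in `P` are compact, because the entries of a PSD matrix satisfy
`2 |Q i j| ≤ Q i i + Q j j` and are therefore bounded by its trace. Near a point `x`, a sum
`a + p ∈ H + P` has `T p = T (a + p) < T x + 1`, so locally `H + P` coincides with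
`H + (P ∩ {T ≤ T x + 1})`, which is closed as the sum of a closed and a compact set; and
`H - P = -(-H + P)`. If `a + p = b - q` with `a, b ∈ H` and `p, q ∈ P`, taking traces gives
`T p + T q = 0`, hence `T p = 0`, and a PSD matrix of trace zero vanishes.
-/

open Topology Pointwise

section SublevelSets

variable {G : Type*} [AddCommGroup G]

theorem add_inter_sub_eq_self {H P : Set G} (T : G →+ ℝ) (hHT : ∀ a ∈ H, T a = 0)
    (hP₀ : 0 ∈ P) (hPT : ∀ p ∈ P, 0 ≤ T p) (hPT₀ : ∀ p ∈ P, T p = 0 → p = 0) :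
    (H + P) ∩ (H - P) = H := by
  refine subset_antisymm ?_ fun a ha => ⟨⟨a, ha, 0, hP₀, add_zero a⟩, ⟨a, ha, 0, hP₀, sub_zero a⟩⟩
  rintro _ ⟨⟨a, ha, p, hp, rfl⟩, ⟨b, hb, q, hq, hab⟩⟩
  have hTp : T p = 0 := by
    have := congrArg T hab
    simp only [map_sub, map_add, hHT a ha, hHT b hb] at this
    linarith [hPT p hp, hPT q hq]
  simpa [hPT₀ p hp hTp] using ha

variable [TopologicalSpace G] [IsTopologicalAddGroup G]

theorem isClosed_add_of_isCompact_sublevel {H P : Set G} (T : G →+ ℝ) (hT : Continuous T)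
    (hH : IsClosed H) (hHT : ∀ a ∈ H, 0 ≤ T a) (hP : ∀ c, IsCompact (P ∩ {p | T p ≤ c})) :
    IsClosed (H + P) := by
  refine isClosed_of_closure_subset fun x hx => ?_
  have hU : IsOpen {y | T y < T x + 1} := isOpen_lt hT continuous_const
  have hloc : {y | T y < T x + 1} ∩ (H + P) ⊆ H + P ∩ {p | T p ≤ T x + 1} := by
    rintro _ ⟨hy, a, ha, p, hp, rfl⟩
    refine ⟨a, ha, p, ⟨hp, ?_⟩, rfl⟩
    simp only [Set.mem_ofPred_eq, map_add] at hy ⊢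
    linarith [hHT a ha]
  have hclosed := hH.add_right_of_isCompact (hP (T x + 1))
  have hx' : x ∈ closure ({y | T y < T x + 1} ∩ (H + P)) :=
    hU.inter_closure ⟨show T x < T x + 1 from lt_add_one _, hx⟩
  exact Set.add_subset_add_left Set.inter_subset_left (hclosed.closure_subset_iff.mpr hloc hx')

end SublevelSets

namespace Matrix.PosSemidef

variable {m : Type*} [Fintype m] {Q : Matrix m m ℝ}

theorem two_mul_abs_apply_le (hQ : Q.PosSemidef) (i j : m) : 2 * |Q i j| ≤ Q i i + Q j j := by
  classical
  have hform (s : ℝ) : 0 ≤ Q i i + s * (Q i j + Q j i) + s ^ 2 * Q j j := by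
    have h := hQ.dotProduct_mulVec_nonneg (Pi.single i 1 + Pi.single j s)
    simp only [star_trivial, mulVec_add, mulVec_single, MulOpposite.op_one, one_smul,
      op_smul_eq_smul, dotProduct_add, add_dotProduct, single_dotProduct, col_apply, one_mul,
      dotProduct_smul, smul_eq_mul] at h
    linarith
  have hsymm : Q j i = Q i j := hQ.isHermitian.apply i j
  have h₁ := hform 1
  have h₂ := hform (-1)
  rw [hsymm] at h₁ h₂
  cases abs_cases (Q i j) <;> linarith

theorem abs_apply_le_trace (hQ : Q.PosSemidef) (i j : m) : |Q i j| ≤ Q.trace := by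
  have hdiag (k : m) : Q k k ≤ Q.trace :=
    Finset.single_le_sum (f := Q.diag) (fun l _ => hQ.diag_nonneg) (Finset.mem_univ k)
  linarith [hQ.two_mul_abs_apply_le i j, hdiag i, hdiag j]

end Matrix.PosSemidef

section SymMat

open Matrix

variable {n : ℕ}

def symTrace (n : ℕ) : SymMat n →+ ℝ :=
  (traceAddMonoidHom (Fin n) ℝ).comp (selfAdjoint _).subtype

theorem continuous_symTrace : Continuous (symTrace n) :=
  continuous_subtype_val.matrix_trace

theorem symTrace_nonneg {Q : SymMat n} (hQ : Q ∈ PSD n) : 0 ≤ symTrace n Q :=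
  PosSemidef.trace_nonneg hQ

theorem eq_zero_of_symTrace_eq_zero {Q : SymMat n} (hQ : Q ∈ PSD n) (h : symTrace n Q = 0) :
    Q = 0 :=
  Subtype.ext ((PosSemidef.trace_eq_zero_iff hQ).mp h)

theorem isClosed_PSD : IsClosed (PSD n) := by
  have : PSD n = ⋂ x : Fin n → ℝ, {Q : SymMat n | 0 ≤ x ⬝ᵥ ((Q : Matrix _ _ ℝ) *ᵥ x)} := by
    ext Q
    have hQ : (Q : Matrix (Fin n) (Fin n) ℝ).IsSymm := isHermitian_iff_isSymm.mp Q.2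
    simp [PSD, posSemidef_iff_dotProduct_mulVec, hQ]
  rw [this]
  exact isClosed_iInter fun x => isClosed_le continuous_const
    (continuous_const.dotProduct (continuous_subtype_val.matrix_mulVec continuous_const))

theorem isCompact_PSD_inter_symTrace_le (c : ℝ) : IsCompact (PSD n ∩ {Q | symTrace n Q ≤ c}) := by
  have hbox :
      IsCompact (Set.univ.pi fun _ : Fin n => Set.univ.pi fun _ : Fin n => Set.Icc (-c) c) :=
    isCompact_univ_pi fun _ => isCompact_univ_pi fun _ => isCompact_Icc
  have hemb : Topology.IsClosedEmbedding (Subtype.val : SymMat n → Matrix (Fin n) (Fin n) ℝ) :=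
    (isClosed_eq continuous_star continuous_id).isClosedEmbedding_subtypeVal
  refine (hemb.isCompact_preimage hbox).of_isClosed_subset
    (isClosed_PSD.inter (isClosed_le continuous_symTrace continuous_const)) ?_
  rintro Q ⟨hQ, hc⟩ i - j -
  exact abs_le.mp ((PosSemidef.abs_apply_le_trace hQ i j).trans hc)

end SymMat

theorem stmt18_general (n : ℕ) (H : Set (SymMat n)) (hcl : IsClosed H)
    (htr : ∀ A ∈ H, Matrix.trace (A : Matrix (Fin n) (Fin n) ℝ) = 0) :
    IsClosed (H + PSD n) ∧ IsClosed (H - PSD n) ∧ H = (H + PSD n) ∩ (H - PSD n) := by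
  have hclosed {K : Set (SymMat n)} (hK : IsClosed K) (hKT : ∀ A ∈ K, symTrace n A = 0) :
      IsClosed (K + PSD n) :=
    isClosed_add_of_isCompact_sublevel (symTrace n) continuous_symTrace hK
      (fun A hA => (hKT A hA).ge) isCompact_PSD_inter_symTrace_le
  have hsub : H - PSD n = -(-H + PSD n) := by rw [neg_add, neg_neg, sub_eq_add_neg]
  refine ⟨hclosed hcl htr, ?_, ?_⟩
  · rw [hsub]
    refine (hclosed hcl.neg fun A hA => ?_).neg
    simpa [symTrace] using htr (-A) hA
  · exact (add_inter_sub_eq_self (symTrace n) htr .zero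
      (fun _ => symTrace_nonneg) (fun _ => eq_zero_of_symTrace_eq_zero)).symm

theorem stmt18 (n : ℕ) (H : Set (SymMat n)) (hne : H.Nonempty) (hcl : IsClosed H)
    (htr : ∀ A ∈ H, Matrix.trace (A : Matrix (Fin n) (Fin n) ℝ) = 0) :
    IsClosed (H + PSD n) ∧ IsClosed (H - PSD n) ∧ H = (H + PSD n) ∩ (H - PSD n) :=
  stmt18_general n H hcl htr
end

section
/- Let u be a function on a convex open set Ω ⊆ ℝⁿ. Then u is C¹ with Du Lipschitz with constant λ if and only if both u + (λ/2)|x|² and −u + (λ/2)|x|² are convex on Ω. -/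
open Topology Pointwise

/-!
If `Du` is `λ`-Lipschitz then `|(Du x - Du y)(x - y)| ≤ λ|x - y|²`, so the derivative of
`u + (λ/2)|x|²` is monotone, and a function with monotone derivative is convex (restrict it to
segments).

Conversely, subgradients of `u + (λ/2)|x|²` and of `-u + (λ/2)|x|²` at `x` give an affine minorant
and an affine majorant of `u` up to `(λ/2)|z - x|²`. Their slopes differ by a linear form bounded
by `λ|z - x|²` near `x`, hence agree, so `u` is differentiable with
`|u z - u x - Du x (z - x)| ≤ (λ/2)|z - x|²`. Comparing these bounds at `x` and `y` at the four
points `x + a ± b`, with `a = (y - x)/2` and `|b| = |a|`, the parallelogram law gives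
`‖Du x - Du y‖ ≤ λ|x - y|` as soon as the ball of radius `|x - y|` about `x` lies in `Ω`;
subdividing the segment `[x, y]` removes that restriction.
-/

open Metric Set AffineMap

variable {E : Type*} [NormedAddCommGroup E] [NormedSpace ℝ E]

theorem convexOn_of_hasFDerivAt_of_monotone {Ω : Set E} (hΩ : Convex ℝ Ω) {f : E → ℝ}
    {f' : E → E →L[ℝ] ℝ} (hf : ∀ x ∈ Ω, HasFDerivAt f (f' x) x)
    (hmono : ∀ x ∈ Ω, ∀ y ∈ Ω, 0 ≤ (f' x - f' y) (x - y)) : ConvexOn ℝ Ω f := by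
  refine ⟨hΩ, fun x hx y hy a b ha hb hab => ?_⟩
  have hmem : ∀ t ∈ Icc (0 : ℝ) 1, lineMap x y t ∈ Ω := fun t ht => hΩ.lineMap_mem hx hy ht
  have hderiv : ∀ t ∈ Icc (0 : ℝ) 1,
      HasDerivAt (f ∘ lineMap x y) (f' (lineMap x y t) (y - x)) t := fun t ht =>
    (hf _ (hmem t ht)).comp_hasDerivAt t hasDerivAt_lineMap
  have hsegment : ConvexOn ℝ (Icc (0 : ℝ) 1) (f ∘ lineMap x y) := by
    refine MonotoneOn.convexOn_of_deriv (convex_Icc 0 1)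
      (fun t ht => (hderiv t ht).continuousAt.continuousWithinAt)
      (fun t ht => (hderiv t (interior_subset ht)).differentiableAt.differentiableWithinAt)
      fun s hs t ht hst => ?_
    rw [interior_Icc] at hs ht
    rw [(hderiv s (Ioo_subset_Icc_self hs)).deriv, (hderiv t (Ioo_subset_Icc_self ht)).deriv,
      ← sub_nonneg, ← sub_apply]
    rcases hst.eq_or_lt with rfl | hst
    · simp
    refine nonneg_of_mul_nonneg_right ?_ (sub_pos.2 hst)
    have hdiff : lineMap x y t - lineMap x y s = (t - s) • (y - x) := by
      simp only [lineMap_apply_module]; module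
    simpa only [hdiff, map_smul, smul_eq_mul] using
      hmono _ (hmem t (Ioo_subset_Icc_self ht)) _ (hmem s (Ioo_subset_Icc_self hs))
  obtain rfl : a = 1 - b := by linarith
  simpa [lineMap_apply_module] using
    hsegment.2 (left_mem_Icc.2 zero_le_one) (right_mem_Icc.2 zero_le_one) ha hb hab

theorem ConvexOn.exists_subgradient {Ω : Set E} (hΩ : IsOpen Ω) {f : E → ℝ} (hf : ConvexOn ℝ Ω f)
    (hcont : ContinuousOn f Ω) {x : E} (hx : x ∈ Ω) :
    ∃ L : E →L[ℝ] ℝ, ∀ z ∈ Ω, f x + L (z - x) ≤ f z := by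
  set S : Set (E × ℝ) := {p | p.1 ∈ Ω ∧ f p.1 < p.2}
  have hS : S = Prod.fst ⁻¹' Ω ∩ (fun p => p.2 - f p.1) ⁻¹' Ioi 0 := by
    ext p; simp [S, sub_pos]
  have hSopen : IsOpen S := by
    rw [hS]
    exact ContinuousOn.isOpen_inter_preimage
      (continuousOn_snd.sub (hcont.comp continuousOn_fst (mapsTo_preimage _ _)))
      (hΩ.preimage continuous_fst) isOpen_Ioi
  obtain ⟨g, hg⟩ := geometric_hahn_banach_open_point hf.convex_strict_epigraph hSopen
    (fun h : (x, f x) ∈ S => lt_irrefl _ h.2)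
  set A : E →L[ℝ] ℝ := g.comp (ContinuousLinearMap.inl ℝ E ℝ)
  set c : ℝ := g (0, 1)
  have hsplit : ∀ z t, g (z, t) = A z + t * c := fun z t => by
    rw [show (z, t) = (z, 0) + t • ((0 : E), (1 : ℝ)) by simp, map_add, map_smul]
    simp [A, c]
  have hsep : ∀ z ∈ Ω, ∀ t, f z < t → A z + t * c < A x + f x * c := fun z hz t ht => by
    simpa only [hsplit] using hg (z, t) ⟨hz, ht⟩
  have hc : c < 0 := by nlinarith [hsep x hx (f x + 1) (lt_add_one _)]
  refine ⟨-c⁻¹ • A, fun z hz => le_of_forall_gt_imp_ge_of_dense fun t ht => ?_⟩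
  have : (A x - A z) / c < t - f x := by
    rw [div_lt_iff_of_neg hc]; linarith [hsep z hz t ht]
  rw [smul_apply, map_sub, smul_eq_mul, show -c⁻¹ * (A z - A x) = (A x - A z) / c by ring]
  linarith

theorem hasFDerivAt_of_abs_sub_le_mul_norm_sq {u : E → ℝ} {L : E →L[ℝ] ℝ} {x : E} {C : ℝ}
    (h : ∀ᶠ z in 𝓝 x, |u z - u x - L (z - x)| ≤ C * ‖z - x‖ ^ 2) : HasFDerivAt u L x := by
  rw [hasFDerivAt_iff_isLittleO_nhds_zero]
  have hshift : ∀ᶠ v in 𝓝 (0 : E), |u (x + v) - u x - L v| ≤ C * ‖v‖ ^ 2 := by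
    have := (continuous_const_add x).tendsto' 0 x (add_zero x)
    simpa using this.eventually h
  refine (Asymptotics.IsBigO.of_bound C ?_).trans_isLittleO
    (Asymptotics.isLittleO_norm_pow_id one_lt_two)
  filter_upwards [hshift] with v hv
  simpa using hv

theorem ContinuousLinearMap.eq_zero_of_eventually_le_mul_norm_sq {M : E →L[ℝ] ℝ} {C : ℝ}
    (h : ∀ᶠ v in 𝓝 0, M v ≤ C * ‖v‖ ^ 2) : M = 0 := by
  have hneg : ∀ᶠ v in 𝓝 0, M (-v) ≤ C * ‖-v‖ ^ 2 :=
    (continuous_neg.tendsto' 0 0 neg_zero).eventually h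
  have hM : HasFDerivAt M (0 : E →L[ℝ] ℝ) 0 := by
    refine hasFDerivAt_of_abs_sub_le_mul_norm_sq (C := C) ?_
    filter_upwards [h, hneg] with v hv hv'
    rw [map_neg, norm_neg] at hv'
    simpa [abs_le] using ⟨by linarith, hv⟩
  exact M.hasFDerivAt.unique hM

theorem dist_le_mul_dist_of_forall_segment {X : Type*} [PseudoMetricSpace X] {f : E → X}
    {x y : E} {K δ : ℝ} (hδ : 0 < δ)
    (hloc : ∀ p ∈ segment ℝ x y, ∀ q ∈ segment ℝ x y, dist p q ≤ δ →
      dist (f p) (f q) ≤ K * dist p q) :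
    dist (f x) (f y) ≤ K * dist x y := by
  obtain ⟨N, hN⟩ := exists_nat_gt (dist x y / δ)
  have hNpos : (0 : ℝ) < N := lt_of_le_of_lt (by positivity) hN
  set c : ℕ → E := fun i => lineMap x y ((i : ℝ) / N)
  have hc : ∀ i < N, c i ∈ segment ℝ x y ∧ c (i + 1) ∈ segment ℝ x y ∧
      dist (c i) (c (i + 1)) = dist x y / N := by
    intro i hi
    have hi' : (i : ℝ) + 1 ≤ N := by exact_mod_cast hi
    refine ⟨lineMap_mem_segment ℝ x y ⟨by positivity, ?_⟩,
      lineMap_mem_segment ℝ x y ⟨by positivity, ?_⟩, ?_⟩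
    · rw [div_le_one hNpos]; linarith
    · rw [div_le_one hNpos]; push_cast; linarith
    · simp only [c, dist_lineMap_lineMap, Real.dist_eq]
      rw [← sub_div, abs_div, Nat.abs_cast]
      push_cast
      rw [show (i : ℝ) - (i + 1) = -1 by ring, abs_neg, abs_one, div_mul_eq_mul_div, one_mul]
  calc dist (f x) (f y) = dist (f (c 0)) (f (c N)) := by simp [c, hNpos.ne']
    _ ≤ ∑ i ∈ Finset.range N, dist (f (c i)) (f (c (i + 1))) :=
      dist_le_range_sum_dist (fun i => f (c i)) N
    _ ≤ ∑ i ∈ Finset.range N, K * (dist x y / N) := by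
      refine Finset.sum_le_sum fun i hi => ?_
      obtain ⟨hci, hci', hdist⟩ := hc i (Finset.mem_range.1 hi)
      rw [← hdist]
      refine hloc _ hci _ hci' (hdist ▸ ?_)
      rw [div_le_iff₀ hNpos]
      rw [div_lt_iff₀ hδ] at hN
      nlinarith
    _ = K * dist x y := by
      rw [Finset.sum_const, Finset.card_range, nsmul_eq_mul]
      field_simp

theorem Convex.dist_le_mul_dist_of_forall_closedBall_subset {X : Type*} [PseudoMetricSpace X]
    {Ω : Set E} (hΩ : IsOpen Ω) (hconv : Convex ℝ Ω) {f : E → X} {K : ℝ}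
    (hloc : ∀ p q, closedBall p (dist p q) ⊆ Ω → dist (f p) (f q) ≤ K * dist p q)
    {x y : E} (hx : x ∈ Ω) (hy : y ∈ Ω) : dist (f x) (f y) ≤ K * dist x y := by
  have hcompact : IsCompact (segment ℝ x y) := by
    rw [segment_eq_image_lineMap]
    exact isCompact_Icc.image lineMap_continuous
  obtain ⟨δ, hδ, hsub⟩ :=
    hcompact.exists_cthickening_subset_open hΩ (hconv.segment_subset hx hy)
  refine dist_le_mul_dist_of_forall_segment hδ fun p hp q _ hpq => hloc p q ?_
  exact (closedBall_subset_cthickening hp _).trans ((cthickening_mono hpq _).trans hsub)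

variable {F : Type*} [NormedAddCommGroup F] [InnerProductSpace ℝ F]

theorem convexOn_add_norm_sq_of_lipschitz {Ω : Set F} (hΩ : Convex ℝ Ω) {lam : ℝ} {u : F → ℝ}
    {u' : F → F →L[ℝ] ℝ} (hu : ∀ x ∈ Ω, HasFDerivAt u (u' x) x)
    (hlip : ∀ x ∈ Ω, ∀ y ∈ Ω, ‖u' x - u' y‖ ≤ lam * ‖x - y‖) :
    ConvexOn ℝ Ω (fun x => u x + lam / 2 * ‖x‖ ^ 2) := by
  refine convexOn_of_hasFDerivAt_of_monotone hΩ
    (fun x hx => (hu x hx).add ((hasStrictFDerivAt_norm_sq x).hasFDerivAt.const_mul (lam / 2)))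
    fun x hx y hy => ?_
  have hquad :
      ((lam / 2) • (2 • innerSL ℝ x) - (lam / 2) • (2 • innerSL ℝ y) : F →L[ℝ] ℝ) (x - y) =
        lam * ‖x - y‖ ^ 2 := by
    simp only [sub_apply, smul_apply, innerSL_apply_apply, smul_eq_mul, nsmul_eq_mul]
    rw [← real_inner_self_eq_norm_sq, inner_sub_left]
    push_cast; ring
  have hlin : -(lam * ‖x - y‖ ^ 2) ≤ (u' x - u' y) (x - y) := by
    calc -(lam * ‖x - y‖ ^ 2) ≤ -(‖u' x - u' y‖ * ‖x - y‖) := by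
          rw [sq, ← mul_assoc]; gcongr; exact hlip x hx y hy
      _ ≤ (u' x - u' y) (x - y) := neg_le_of_abs_le ((u' x - u' y).le_opNorm (x - y))
  rw [add_sub_add_comm, add_apply, hquad]
  linarith

theorem exists_hasFDerivAt_of_convexOn_add_norm_sq [FiniteDimensional ℝ F] {Ω : Set F}
    (hΩ : IsOpen Ω) {lam : ℝ} {u : F → ℝ}
    (hg : ConvexOn ℝ Ω (fun x => u x + lam / 2 * ‖x‖ ^ 2))
    (hh : ConvexOn ℝ Ω (fun x => -u x + lam / 2 * ‖x‖ ^ 2)) {x : F} (hx : x ∈ Ω) :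
    ∃ L : F →L[ℝ] ℝ, HasFDerivAt u L x ∧
      ∀ z ∈ Ω, |u z - u x - L (z - x)| ≤ lam / 2 * ‖z - x‖ ^ 2 := by
  obtain ⟨Lg, hLg⟩ := hg.exists_subgradient hΩ (hg.continuousOn hΩ) hx
  obtain ⟨Lh, hLh⟩ := hh.exists_subgradient hΩ (hh.continuousOn hΩ) hx
  set a : F →L[ℝ] ℝ := lam • innerSL ℝ x
  have hquad : ∀ z, lam / 2 * ‖z‖ ^ 2 - lam / 2 * ‖x‖ ^ 2 =
      a (z - x) + lam / 2 * ‖z - x‖ ^ 2 := by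
    intro z
    have := norm_add_sq_real x (z - x)
    rw [add_sub_cancel] at this
    simp only [a, smul_apply, innerSL_apply_apply, smul_eq_mul]
    linear_combination lam / 2 * this
  have hlow : ∀ z ∈ Ω, -(lam / 2 * ‖z - x‖ ^ 2) ≤ u z - u x - (Lg - a) (z - x) := by
    intro z hz
    have := hLg z hz
    rw [sub_apply]
    linarith [hquad z]
  have hupp : ∀ z ∈ Ω, u z - u x - (a - Lh) (z - x) ≤ lam / 2 * ‖z - x‖ ^ 2 := by
    intro z hz
    have := hLh z hz
    rw [sub_apply]
    linarith [hquad z]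
  have hL : Lg - a = a - Lh := by
    refine sub_eq_zero.1 (ContinuousLinearMap.eq_zero_of_eventually_le_mul_norm_sq (C := lam) ?_)
    have := (continuous_const_add x).tendsto' 0 x (add_zero x)
    filter_upwards [this.eventually (hΩ.mem_nhds hx)] with v hv
    have h1 := hlow _ hv
    have h2 := hupp _ hv
    rw [add_sub_cancel_left] at h1 h2
    rw [sub_apply]
    linarith
  have hbound : ∀ z ∈ Ω, |u z - u x - (Lg - a) (z - x)| ≤ lam / 2 * ‖z - x‖ ^ 2 :=
    fun z hz => abs_le.2 ⟨hlow z hz, hL ▸ hupp z hz⟩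
  exact ⟨Lg - a, hasFDerivAt_of_abs_sub_le_mul_norm_sq
    (Filter.eventually_of_mem (hΩ.mem_nhds hx) hbound), hbound⟩

theorem dist_le_mul_dist_of_abs_sub_le_mul_norm_sq {Ω : Set F} {lam : ℝ} (hlam : 0 ≤ lam)
    {u : F → ℝ} {P : F → F →L[ℝ] ℝ}
    (hP : ∀ x ∈ Ω, ∀ z ∈ Ω, |u z - u x - P x (z - x)| ≤ lam / 2 * ‖z - x‖ ^ 2) {x y : F}
    (hball : closedBall x (dist x y) ⊆ Ω) : dist (P x) (P y) ≤ lam * dist x y := by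
  set r := dist x y
  have hx : x ∈ Ω := hball (mem_closedBall_self dist_nonneg)
  have hy : y ∈ Ω := hball (by simp [r, dist_comm])
  suffices hunit : ∀ v : F, ‖v‖ = 1 → r * (P x - P y) v ≤ lam * r ^ 2 by
    rcases (dist_nonneg : 0 ≤ r).eq_or_lt with hr | hr
    · rw [dist_eq_zero.1 hr.symm, dist_self]
      exact mul_nonneg hlam dist_nonneg
    rw [dist_eq_norm]
    refine ContinuousLinearMap.opNorm_le_of_unit_norm (by positivity) fun v hv => ?_
    have h1 := hunit v hv
    have h2 := hunit (-v) (by rwa [norm_neg])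
    rw [map_neg] at h2
    rw [Real.norm_eq_abs, abs_le]
    constructor <;> nlinarith
  intro v hv
  set a : F := (1 / 2 : ℝ) • (y - x)
  set b : F := (r / 2) • v
  have ha : ‖a‖ = r / 2 := by
    rw [norm_smul, ← dist_eq_norm', Real.norm_of_nonneg (by norm_num)]; ring
  have hb : ‖b‖ = r / 2 := by
    rw [norm_smul, hv, Real.norm_of_nonneg (by positivity), mul_one]
  have hpar := parallelogram_law_with_norm ℝ a b
  have hmem : ∀ w : F, ‖w‖ ≤ r → x + w ∈ Ω := fun w hw =>
    hball (by rwa [mem_closedBall, dist_eq_norm, add_sub_cancel_left])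
  have hz₁ : x + (a + b) ∈ Ω := hmem _ ((norm_add_le a b).trans (by rw [ha, hb]; linarith))
  have hz₂ : x + (a - b) ∈ Ω := hmem _ ((norm_sub_le a b).trans (by rw [ha, hb]; linarith))
  have hyz₁ : x + (a + b) - y = -(a - b) := by simp only [a]; module
  have hyz₂ : x + (a - b) - y = -(a + b) := by simp only [a]; module
  have i1 := (abs_le.1 (hP x hx _ hz₁)).1
  have i2 := (abs_le.1 (hP y hy _ hz₁)).2
  have i3 := (abs_le.1 (hP y hy _ hz₂)).1
  have i4 := (abs_le.1 (hP x hx _ hz₂)).2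
  rw [hyz₁, norm_neg] at i2
  rw [hyz₂, norm_neg] at i3
  simp only [add_sub_cancel_left, map_neg, map_add, map_sub] at i1 i2 i3 i4
  have hPb : ∀ Q : F →L[ℝ] ℝ, Q b = r / 2 * Q v := fun Q => by simp [b]
  rw [ha, hb] at hpar
  rw [sub_apply, mul_sub]
  linarith [hPb (P x), hPb (P y), congrArg (lam / 2 * ·) hpar]

theorem stmt19 (n : ℕ) (Ω : Set (EuclideanSpace ℝ (Fin n)))
    (hΩ : IsOpen Ω) (hconv : Convex ℝ Ω) (lam : ℝ) (hlam : 0 ≤ lam)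
    (u : EuclideanSpace ℝ (Fin n) → ℝ) :
    ((∀ x ∈ Ω, DifferentiableAt ℝ u x) ∧
        ∀ x ∈ Ω, ∀ y ∈ Ω, ‖fderiv ℝ u x - fderiv ℝ u y‖ ≤ lam * ‖x - y‖) ↔
      (ConvexOn ℝ Ω (fun x => u x + lam / 2 * ‖x‖ ^ 2) ∧
        ConvexOn ℝ Ω (fun x => -u x + lam / 2 * ‖x‖ ^ 2)) := by
  constructor
  · rintro ⟨hd, hlip⟩
    refine ⟨convexOn_add_norm_sq_of_lipschitz hconv (fun x hx => (hd x hx).hasFDerivAt) hlip,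
      convexOn_add_norm_sq_of_lipschitz hconv (fun x hx => (hd x hx).hasFDerivAt.neg)
        fun x hx y hy => ?_⟩
    rw [neg_sub_neg, norm_sub_rev]
    exact hlip x hx y hy
  · rintro ⟨hg, hh⟩
    have htaylor : ∀ x ∈ Ω, DifferentiableAt ℝ u x ∧
        ∀ z ∈ Ω, |u z - u x - fderiv ℝ u x (z - x)| ≤ lam / 2 * ‖z - x‖ ^ 2 := fun x hx => by
      obtain ⟨L, hL, hbound⟩ := exists_hasFDerivAt_of_convexOn_add_norm_sq hΩ hg hh hx
      exact ⟨hL.differentiableAt, hL.fderiv ▸ hbound⟩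
    refine ⟨fun x hx => (htaylor x hx).1, fun x hx y hy => ?_⟩
    rw [← dist_eq_norm, ← dist_eq_norm]
    exact hconv.dist_le_mul_dist_of_forall_closedBall_subset hΩ
      (fun _ _ => dist_le_mul_dist_of_abs_sub_le_mul_norm_sq hlam fun x hx => (htaylor x hx).2)
      hx hy
end
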